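/- arXiv:1510.05130 — 3 statements merged into one kernel-verified Lean document; each statement's English description precedes it below -/
import Mathlib

section
/- Let A = [a_ij] ∈ ℂ^{n×n}, n ≥ 2, and let S be a nonempty proper subset of N such that (i) the principal submatrix A|_{S²} is an H-matrix, and (ii) for every j ∈ S̄ = N \ S, ‖ℳ(A|_{S²})^{-1} · r^{S̄}(A)‖_∞ · r_j^S(A) < |a_jj| − r_j^{S̄}(A), where r^{S̄}(A) is the vector with components r_i^{S̄}(A) for i ∈ S. Then A is an H-matrix. -/
open scoped BigOperators

noncomputable section

/-- Deleted `i`-th row sum of `|A|`, restricted to the index set `S`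
    (i.e. `r_i^S(A) = ∑_{j ∈ S \ {i}} |a_{ij}|`). -/
def rowSumOn {ι : Type*} [Fintype ι] [DecidableEq ι]
    (A : Matrix ι ι ℂ) (S : Finset ι) (i : ι) : ℝ :=
  ∑ j ∈ S.erase i, ‖A i j‖

/-- Deleted `i`-th row sum `r_i(A) = ∑_{j ≠ i} |a_{ij}|`. -/
def rowSum {ι : Type*} [Fintype ι] [DecidableEq ι]
    (A : Matrix ι ι ℂ) (i : ι) : ℝ :=
  rowSumOn A Finset.univ i

/-- `A` is strictly diagonally dominant (SDD). -/
def IsSDD {ι : Type*} [Fintype ι] [DecidableEq ι] (A : Matrix ι ι ℂ) : Prop :=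
  ∀ i, rowSum A i < ‖A i i‖

/-- `A` is diagonally dominant (DD). -/
def IsDD {ι : Type*} [Fintype ι] [DecidableEq ι] (A : Matrix ι ι ℂ) : Prop :=
  ∀ i, rowSum A i ≤ ‖A i i‖

/-- `A` is DD+ : diagonally dominant with at least one strictly dominant row. -/
def IsDDplus {ι : Type*} [Fintype ι] [DecidableEq ι] (A : Matrix ι ι ℂ) : Prop :=
  IsDD A ∧ ∃ i, rowSum A i < ‖A i i‖

/-- `A` is an H-matrix: there is a diagonal matrix `D` with positive diagonal
    entries such that `A * D` is SDD. -/
def IsHMatrix {ι : Type*} [Fintype ι] [DecidableEq ι] (A : Matrix ι ι ℂ) : Prop :=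
  ∃ d : ι → ℝ, (∀ i, 0 < d i) ∧ IsSDD (A * Matrix.diagonal fun i => (d i : ℂ))

/-- `T(A)`: the set of indices of non-SDD rows of `A`. -/
def TSet {ι : Type*} [Fintype ι] [DecidableEq ι] (A : Matrix ι ι ℂ) : Finset ι :=
  Finset.univ.filter fun i => ‖A i i‖ ≤ rowSum A i

/-- The principal submatrix `A|_{M²}` of `A` corresponding to the index set `M`. -/
def subMat {ι : Type*} [Fintype ι] [DecidableEq ι]
    (A : Matrix ι ι ℂ) (M : Finset ι) : Matrix {i // i ∈ M} {i // i ∈ M} ℂ :=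
  Matrix.of fun i j => A i.val j.val

/-- There exists a nonzero elements chain `a_{i₀i₁}, a_{i₁i₂}, …, a_{i_{r-1}i_r}`
    starting at `i₀` and ending at some `i_r ∉ T(A)`. -/
def HasChainOut {ι : Type*} [Fintype ι] [DecidableEq ι]
    (A : Matrix ι ι ℂ) (i₀ : ι) : Prop :=
  ∃ (r : ℕ) (c : Fin (r + 1) → ι), 0 < r ∧ c 0 = i₀ ∧
    (∀ k : Fin r, A (c k.castSucc) (c k.succ) ≠ 0) ∧ c (Fin.last r) ∉ TSet A

/-- `S` is an interwoven set of indices for `A`: `S` is a proper subset of `N`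
    and either `|S| ≤ 1`, or `|S| = s > 1` and there exist distinct
    `p₁,…,p_{s-1} ∈ S` and `q₁,…,q_{s-1}` with `q₁ ∈ N \ S`, `a_{p₁q₁} ≠ 0`, and
    `q_i ∈ (N \ S) ∪ {p₁,…,p_{i-1}}`, `a_{p_iq_i} ≠ 0` for `i = 2,…,s-1`. -/
def Interwoven {ι : Type*} [Fintype ι] [DecidableEq ι]
    (A : Matrix ι ι ℂ) (S : Finset ι) : Prop :=
  S ⊂ Finset.univ ∧
    (S.card ≤ 1 ∨
      (1 < S.card ∧ ∃ p q : Fin (S.card - 1) → ι,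
        Function.Injective p ∧ (∀ i, p i ∈ S) ∧
        ∀ i, A (p i) (q i) ≠ 0 ∧ (q i ∉ S ∨ ∃ j, j < i ∧ q i = p j)))

/-- The comparison matrix `ℳ(A)`. -/
def CompMat {ι : Type*} [Fintype ι] [DecidableEq ι] (A : Matrix ι ι ℂ) : Matrix ι ι ℝ :=
  Matrix.of fun i j => if i = j then ‖A i i‖ else -‖A i j‖

/-!
Write `M = ℳ(A|_{S²})` and `r = r^{S̄}(A)`. As `A|_{S²}` is an H-matrix, some `e > 0` has
`M e > 0`; for the Z-matrix `M` this gives `M z ≥ 0 → z ≥ 0`, so `M` is nonsingular and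
`x = M⁻¹ r ≥ 0`. Scale the columns of `A` by `x + ε e` on `S` and by `1` on `S̄`. A row `i ∈ S`
then has diagonal surplus `ε (M e)_i > 0`, and a row `j ∈ S̄` has off-diagonal sum at most
`‖x‖_∞ r_j^S(A) + r_j^{S̄}(A) + O(ε)`, which is `< |a_jj|` by (ii) once `ε > 0` is small.
-/

namespace Matrix

variable {ι 𝕜 : Type*} [Fintype ι] [Field 𝕜] [LinearOrder 𝕜] [IsStrictOrderedRing 𝕜]
  {M : Matrix ι ι 𝕜} {e : ι → 𝕜}

/-- Otherwise `w = z + c • e`, with the least `c > 0` making `w ≥ 0`, vanishes at some `i₀`, where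
`(M w) i₀ ≤ 0` because `M` is a Z-matrix, while `(M w) i₀ ≥ c (M e) i₀ > 0`. -/
theorem nonneg_of_nonneg_mulVec (hM : ∀ i j, i ≠ j → M i j ≤ 0) (he : ∀ i, 0 < e i)
    (hMe : ∀ i, 0 < (M *ᵥ e) i) {z : ι → 𝕜} (hz : 0 ≤ M *ᵥ z) : 0 ≤ z := by
  by_contra hneg
  obtain ⟨i₁, hi₁⟩ : ∃ i, z i < 0 := by simpa [Pi.le_def] using hneg
  obtain ⟨i₀, -, hmax⟩ := Finset.univ.exists_max_image (fun i => -z i / e i) ⟨i₁, by simp⟩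
  set c := -z i₀ / e i₀
  have hc : 0 < c :=
    (div_pos (neg_pos.2 hi₁) (he i₁)).trans_le (hmax i₁ (Finset.mem_univ _))
  set w := z + c • e
  have hw : 0 ≤ w := fun j => by
    have := (div_le_iff₀ (he j)).1 (hmax j (Finset.mem_univ _))
    simp only [w, Pi.add_apply, Pi.smul_apply, smul_eq_mul, Pi.zero_apply]
    linarith
  have hwi₀ : w i₀ = 0 := by
    simp only [w, c, Pi.add_apply, Pi.smul_apply, smul_eq_mul]
    field_simp [(he i₀).ne']
    ring
  have hle : (M *ᵥ w) i₀ ≤ 0 := Finset.sum_nonpos fun j _ => by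
    rcases eq_or_ne i₀ j with rfl | hj
    · simp [hwi₀]
    · exact mul_nonpos_of_nonpos_of_nonneg (hM i₀ j hj) (hw j)
  have hpos : 0 < (M *ᵥ w) i₀ := by
    rw [mulVec_add, mulVec_smul, Pi.add_apply, Pi.smul_apply, smul_eq_mul]
    exact add_pos_of_nonneg_of_pos (hz i₀) (mul_pos hc (hMe i₀))
  exact hle.not_gt hpos

theorem det_ne_zero_of_mulVec_pos [DecidableEq ι] (hM : ∀ i j, i ≠ j → M i j ≤ 0)
    (he : ∀ i, 0 < e i) (hMe : ∀ i, 0 < (M *ᵥ e) i) : M.det ≠ 0 := by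
  intro hdet
  obtain ⟨v, hv, hMv⟩ := exists_mulVec_eq_zero_iff.2 hdet
  have hv₁ : 0 ≤ v := nonneg_of_nonneg_mulVec hM he hMe (by rw [hMv])
  have hv₂ : 0 ≤ -v := nonneg_of_nonneg_mulVec hM he hMe (by rw [mulVec_neg, hMv, neg_zero])
  exact hv (le_antisymm (neg_nonneg.1 hv₂) hv₁)

end Matrix

open Matrix

section ComparisonMatrix

variable {ι : Type*} [Fintype ι] [DecidableEq ι]

theorem compMat_apply_of_ne (B : Matrix ι ι ℂ) {i j : ι} (hij : i ≠ j) :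
    CompMat B i j = -‖B i j‖ := if_neg hij

theorem compMat_nonpos_of_ne (B : Matrix ι ι ℂ) {i j : ι} (hij : i ≠ j) : CompMat B i j ≤ 0 := by
  rw [compMat_apply_of_ne B hij, neg_nonpos]
  exact norm_nonneg _

theorem compMat_mulVec_apply (B : Matrix ι ι ℂ) (v : ι → ℝ) (i : ι) :
    (CompMat B *ᵥ v) i = ‖B i i‖ * v i - ∑ j ∈ Finset.univ.erase i, ‖B i j‖ * v j := by
  rw [mulVec, dotProduct, ← Finset.add_sum_erase _ _ (Finset.mem_univ i), sub_eq_add_neg,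
    ← Finset.sum_neg_distrib]
  congr 1
  · simp [CompMat]
  · refine Finset.sum_congr rfl fun j hj => ?_
    rw [compMat_apply_of_ne B (Finset.ne_of_mem_erase hj).symm, neg_mul]

theorem norm_mul_diagonal_apply (B : Matrix ι ι ℂ) {d : ι → ℝ} (hd : 0 ≤ d) (i j : ι) :
    ‖(B * diagonal fun k => (d k : ℂ)) i j‖ = ‖B i j‖ * d j := by
  rw [mul_diagonal, norm_mul, Complex.norm_of_nonneg (hd j)]

theorem rowSumOn_mul_diagonal (B : Matrix ι ι ℂ) {d : ι → ℝ} (hd : 0 ≤ d) (S : Finset ι) (i : ι) :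
    rowSumOn (B * diagonal fun k => (d k : ℂ)) S i = ∑ j ∈ S.erase i, ‖B i j‖ * d j :=
  Finset.sum_congr rfl fun j _ => norm_mul_diagonal_apply B hd i j

theorem isSDD_mul_diagonal_iff (B : Matrix ι ι ℂ) {d : ι → ℝ} (hd : 0 ≤ d) :
    IsSDD (B * diagonal fun k => (d k : ℂ)) ↔ ∀ i, 0 < (CompMat B *ᵥ d) i := by
  refine forall_congr' fun i => ?_
  rw [rowSum, rowSumOn_mul_diagonal B hd, norm_mul_diagonal_apply B hd, compMat_mulVec_apply,
    sub_pos]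

theorem IsHMatrix.exists_compMat_mulVec_pos {B : Matrix ι ι ℂ} (hB : IsHMatrix B) :
    ∃ e : ι → ℝ, (∀ i, 0 < e i) ∧ ∀ i, 0 < (CompMat B *ᵥ e) i := by
  obtain ⟨e, he, hSDD⟩ := hB
  exact ⟨e, he, (isSDD_mul_diagonal_iff B fun i => (he i).le).1 hSDD⟩

theorem rowSum_eq_rowSumOn_add_rowSumOn_compl (B : Matrix ι ι ℂ) (S : Finset ι) (i : ι) :
    rowSum B i = rowSumOn B S i + rowSumOn B Sᶜ i := by
  rw [rowSum, rowSumOn, rowSumOn, rowSumOn, ← Finset.sum_union (disjoint_compl_right.mono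
    (Finset.erase_subset _ _) (Finset.erase_subset _ _)), ← Finset.erase_union_distrib,
    Finset.union_compl]

theorem rowSum_subMat (B : Matrix ι ι ℂ) (S : Finset ι) (i : {i // i ∈ S}) :
    rowSum (subMat B S) i = rowSumOn B S i := by
  have h := Finset.sum_erase_add Finset.univ (fun j : {j // j ∈ S} => ‖B i j‖) (Finset.mem_univ i)
  rw [Finset.sum_coe_sort S (fun j => ‖B i j‖), ← Finset.sum_erase_add S _ i.2] at h
  exact add_right_cancel h

theorem rowSumOn_of_notMem (B : Matrix ι ι ℂ) {S : Finset ι} {i : ι} (hi : i ∉ S) :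
    rowSumOn B S i = ∑ j : {j // j ∈ S}, ‖B i j‖ := by
  rw [rowSumOn, Finset.erase_eq_of_notMem hi, Finset.sum_coe_sort S (fun j => ‖B i j‖)]

end ComparisonMatrix

section BlockScaling

open Filter Topology

variable {ι : Type*} [Fintype ι] [DecidableEq ι]

theorem subMat_mul_diagonal (B : Matrix ι ι ℂ) (S : Finset ι) (d : ι → ℂ) :
    subMat (B * diagonal d) S = subMat B S * diagonal fun k : {k // k ∈ S} => d k := by
  ext i j
  simp [subMat, mul_diagonal]

theorem isHMatrix_of_subMat_scaling (A : Matrix ι ι ℂ) (S : Finset ι) {y : {i // i ∈ S} → ℝ}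
    (hy : ∀ i, 0 < y i) (hS : ∀ i : {i // i ∈ S}, rowSumOn A Sᶜ i < (CompMat (subMat A S) *ᵥ y) i)
    (hSc : ∀ j ∉ S, ∑ k : {k // k ∈ S}, ‖A j k‖ * y k < ‖A j j‖ - rowSumOn A Sᶜ j) :
    IsHMatrix A := by
  set d : ι → ℝ := fun i => if h : i ∈ S then y ⟨i, h⟩ else 1
  have hd : ∀ i, 0 < d i := fun i => by
    by_cases hi : i ∈ S
    · simpa [d, hi] using hy ⟨i, hi⟩
    · simp [d, hi]
  have hd₀ : 0 ≤ d := fun i => (hd i).le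
  have hdy : ∀ k : {k // k ∈ S}, d k = y k := fun k => dif_pos k.2
  have hcompl : ∀ i, rowSumOn (A * diagonal fun k => (d k : ℂ)) Sᶜ i = rowSumOn A Sᶜ i :=
    fun i => (rowSumOn_mul_diagonal A hd₀ _ i).trans <| Finset.sum_congr rfl fun j hj => by
      simp [d, Finset.mem_compl.1 (Finset.mem_of_mem_erase hj)]
  refine ⟨d, hd, fun i => ?_⟩
  rw [rowSum_eq_rowSumOn_add_rowSumOn_compl _ S, hcompl, norm_mul_diagonal_apply A hd₀]
  by_cases hi : i ∈ S
  · have hrow : rowSumOn (A * diagonal fun k => (d k : ℂ)) S i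
        = ‖A i i‖ * y ⟨i, hi⟩ - (CompMat (subMat A S) *ᵥ y) ⟨i, hi⟩ := by
      rw [← rowSum_subMat _ S ⟨i, hi⟩, subMat_mul_diagonal]
      simp only [hdy]
      rw [rowSum, rowSumOn_mul_diagonal _ (fun k => (hy k).le), compMat_mulVec_apply]
      simp only [subMat, of_apply]
      ring
    rw [hrow, show d i = y ⟨i, hi⟩ from dif_pos hi]
    linarith [hS ⟨i, hi⟩]
  · have hrow : rowSumOn (A * diagonal fun k => (d k : ℂ)) S i
        = ∑ k : {k // k ∈ S}, ‖A i k‖ * y k := by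
      rw [rowSumOn_of_notMem _ hi]
      simp only [norm_mul_diagonal_apply A hd₀, hdy]
    rw [hrow, show d i = 1 from dif_neg hi, mul_one]
    linarith [hSc i hi]

theorem isHMatrix_of_compMat_mulVec_ge (A : Matrix ι ι ℂ) (S : Finset ι)
    (hH : IsHMatrix (subMat A S)) {x : {i // i ∈ S} → ℝ} (hx₀ : 0 ≤ x)
    (hx : ∀ i : {i // i ∈ S}, rowSumOn A Sᶜ i ≤ (CompMat (subMat A S) *ᵥ x) i)
    (hSc : ∀ j ∉ S, ∑ k : {k // k ∈ S}, ‖A j k‖ * x k < ‖A j j‖ - rowSumOn A Sᶜ j) :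
    IsHMatrix A := by
  obtain ⟨e, he, hMe⟩ := hH.exists_compMat_mulVec_pos
  have hsmall : ∀ᶠ ε in 𝓝 (0 : ℝ), ∀ j ∉ S,
      ∑ k : {k // k ∈ S}, ‖A j k‖ * (x + ε • e) k < ‖A j j‖ - rowSumOn A Sᶜ j := by
    refine eventually_all.2 fun j => ?_
    by_cases hj : j ∈ S
    · exact Eventually.of_forall fun _ h => absurd hj h
    have hcont : Continuous fun ε : ℝ => ∑ k : {k // k ∈ S}, ‖A j k‖ * (x + ε • e) k := by
      fun_prop
    filter_upwards [hcont.continuousAt.eventually_lt continuousAt_const (by simpa using hSc j hj)]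
      with ε hε _ using hε
  obtain ⟨ε, hε, hεpos⟩ := ((hsmall.filter_mono nhdsWithin_le_nhds).and
    (self_mem_nhdsWithin : ∀ᶠ ε in 𝓝[>] (0 : ℝ), 0 < ε)).exists
  refine isHMatrix_of_subMat_scaling A S (fun i => ?_) (fun i => ?_) hε
  · exact add_pos_of_nonneg_of_pos (hx₀ i) (mul_pos hεpos (he i))
  · rw [mulVec_add, mulVec_smul, Pi.add_apply, Pi.smul_apply, smul_eq_mul]
    linarith [hx i, mul_pos hεpos (hMe i)]

theorem sum_norm_mul_le_norm_mul_rowSumOn (A : Matrix ι ι ℂ) {S : Finset ι} {j : ι} (hj : j ∉ S)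
    (x : {i // i ∈ S} → ℝ) : ∑ k : {k // k ∈ S}, ‖A j k‖ * x k ≤ ‖x‖ * rowSumOn A S j := by
  rw [rowSumOn_of_notMem A hj, Finset.mul_sum]
  refine Finset.sum_le_sum fun k _ => ?_
  rw [mul_comm]
  exact mul_le_mul_of_nonneg_right ((Real.le_norm_self _).trans (norm_le_pi_norm x k))
    (norm_nonneg _)

end BlockScaling

theorem sh_matrix_is_hmatrix_general (n : ℕ)
    (A : Matrix (Fin n) (Fin n) ℂ) (S : Finset (Fin n))
    (h1 : IsHMatrix (subMat A S))
    (h2 : ∀ j ∉ S,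
      ‖Matrix.mulVec (CompMat (subMat A S))⁻¹ (fun i : {i // i ∈ S} => rowSumOn A Sᶜ i.val)‖ *
          rowSumOn A S j < ‖A j j‖ - rowSumOn A Sᶜ j) :
    IsHMatrix A := by
  set M := CompMat (subMat A S)
  set r : {i // i ∈ S} → ℝ := fun i => rowSumOn A Sᶜ i
  obtain ⟨e, he, hMe⟩ := h1.exists_compMat_mulVec_pos
  have hM : ∀ i j, i ≠ j → M i j ≤ 0 := fun _ _ => compMat_nonpos_of_ne _
  have hx : M *ᵥ (M⁻¹ *ᵥ r) = r := by
    rw [mulVec_mulVec, mul_nonsing_inv _ (det_ne_zero_of_mulVec_pos hM he hMe).isUnit, one_mulVec]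
  have hr : 0 ≤ r := fun i => Finset.sum_nonneg fun _ _ => norm_nonneg _
  refine isHMatrix_of_compMat_mulVec_ge A S h1 (nonneg_of_nonneg_mulVec hM he hMe (by rwa [hx]))
    (fun i => (congrFun hx i).ge) fun j hj => ?_
  exact (sum_norm_mul_le_norm_mul_rowSumOn A hj _).trans_lt (by linarith [h2 j hj])

/-- Huang. If `S` is a nonempty proper subset of `N` such that
`A|_{S²}` is an H-matrix and
`‖ℳ(A|_{S²})⁻¹ ⬝ r^{S̄}(A)‖_∞ ⬝ r_j^S(A) < |a_jj| − r_j^{S̄}(A)` for every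
`j ∈ S̄`, then `A` is an H-matrix. -/
theorem sh_matrix_is_hmatrix (n : ℕ) (hn : 2 ≤ n)
    (A : Matrix (Fin n) (Fin n) ℂ) (S : Finset (Fin n))
    (hS1 : S.Nonempty) (hS2 : S ≠ Finset.univ)
    (h1 : IsHMatrix (subMat A S))
    (h2 : ∀ j ∉ S,
      ‖Matrix.mulVec (CompMat (subMat A S))⁻¹ (fun i : {i // i ∈ S} => rowSumOn A Sᶜ i.val)‖ *
          rowSumOn A S j < ‖A j j‖ - rowSumOn A Sᶜ j) :
    IsHMatrix A :=
  sh_matrix_is_hmatrix_general n A S h1 h2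

end
end

section
/- Let A = [a_ij] ∈ ℂ^{n×n}, n ≥ 2, be a DD matrix. Then A is not an H-matrix if and only if there exists a nonempty subset M ⊆ T(A) such that the principal submatrix A|_{M²} (which is DD) is not a DD+ matrix, i.e., |a_ii| ≤ Σ_{j∈M, j≠i} |a_ij| for every i ∈ M. -/
open scoped BigOperators

noncomputable section

/-!
If `A * D` is SDD, the row of `M` on which `d` is smallest is strictly dominant already in
`A|_{M²}`. Conversely, suppose every nonempty `M ⊆ T(A)` has such a row and take `M = T(A)`:
the strictly dominant row `i` of `A|_{M²}` has an entry `a_ij ≠ 0` with `j ∉ T(A)`, because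
`|a_ii| = r_i(A)` by diagonal dominance. Multiplying the columns outside `T(A)` by some `t < 1`
close to `1` keeps the matrix DD and its strict rows strict, makes row `i` strict, and leaves
`A|_{T(A)²}` unchanged, so the hypothesis survives and induction on `|T(A)|` concludes.
-/

open Finset Filter Topology

section

variable {ι : Type*} [Fintype ι] [DecidableEq ι]

lemma mem_TSet {A : Matrix ι ι ℂ} {i : ι} : i ∈ TSet A ↔ ‖A i i‖ ≤ rowSum A i := by
  simp [TSet]

lemma norm_mul_diagonal_ofReal (A : Matrix ι ι ℂ) {d : ι → ℝ} (hd : ∀ j, 0 ≤ d j) (i j : ι) :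
    ‖(A * Matrix.diagonal fun k => (d k : ℂ)) i j‖ = ‖A i j‖ * d j := by
  rw [Matrix.mul_diagonal, norm_mul, Complex.norm_real, Real.norm_of_nonneg (hd j)]

lemma rowSumOn_mul_diagonal_ofReal (A : Matrix ι ι ℂ) {d : ι → ℝ} (hd : ∀ j, 0 ≤ d j)
    (S : Finset ι) (i : ι) :
    rowSumOn (A * Matrix.diagonal fun k => (d k : ℂ)) S i = ∑ j ∈ S.erase i, ‖A i j‖ * d j :=
  sum_congr rfl fun j _ => norm_mul_diagonal_ofReal A hd i j

lemma exists_ne_notMem_of_rowSumOn_lt_rowSum {A : Matrix ι ι ℂ} {M : Finset ι} {i : ι}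
    (h : rowSumOn A M i < rowSum A i) : ∃ j ∉ M, j ≠ i ∧ A i j ≠ 0 := by
  by_contra! hM
  refine h.ne (sum_subset (erase_subset_erase i (subset_univ M)) fun j hj hjM => ?_)
  rw [hM j (fun h => hjM (mem_erase.2 ⟨ne_of_mem_erase hj, h⟩)) (ne_of_mem_erase hj), norm_zero]

lemma IsHMatrix.exists_rowSumOn_lt {A : Matrix ι ι ℂ} (hA : IsHMatrix A) {M : Finset ι}
    (hM : M.Nonempty) : ∃ i ∈ M, rowSumOn A M i < ‖A i i‖ := by
  obtain ⟨d, hd, hSDD⟩ := hA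
  obtain ⟨i, hiM, hmin⟩ := exists_min_image M d hM
  refine ⟨i, hiM, lt_of_mul_lt_mul_right ?_ (hd i).le⟩
  have hd0 : ∀ j, 0 ≤ d j := fun j => (hd j).le
  calc rowSumOn A M i * d i
      = ∑ j ∈ M.erase i, ‖A i j‖ * d i := sum_mul _ _ _
    _ ≤ ∑ j ∈ M.erase i, ‖A i j‖ * d j :=
      sum_le_sum fun j hj =>
        mul_le_mul_of_nonneg_left (hmin j (mem_of_mem_erase hj)) (norm_nonneg _)
    _ ≤ ∑ j ∈ univ.erase i, ‖A i j‖ * d j :=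
      sum_le_sum_of_subset_of_nonneg (erase_subset_erase i (subset_univ M))
        fun j _ _ => mul_nonneg (norm_nonneg _) (hd0 j)
    _ < ‖A i i‖ * d i := by
      simpa only [rowSum, rowSumOn_mul_diagonal_ofReal A hd0,
        norm_mul_diagonal_ofReal A hd0] using hSDD i

lemma IsHMatrix.of_mul_diagonal {A : Matrix ι ι ℂ} {d : ι → ℝ} (hd : ∀ i, 0 < d i)
    (h : IsHMatrix (A * Matrix.diagonal fun k => (d k : ℂ))) : IsHMatrix A := by
  obtain ⟨e, he, hSDD⟩ := h
  refine ⟨d * e, fun i => mul_pos (hd i) (he i), ?_⟩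
  simpa only [Matrix.mul_assoc, Matrix.diagonal_mul_diagonal, Pi.mul_apply, Complex.ofReal_mul]
    using hSDD

lemma IsSDD.isHMatrix {A : Matrix ι ι ℂ} (hA : IsSDD A) : IsHMatrix A :=
  ⟨1, fun _ => one_pos, by simpa only [Pi.one_apply, Complex.ofReal_one, Matrix.diagonal_one,
    Matrix.mul_one] using hA⟩

lemma eventually_sum_mul_scaling_lt (A : Matrix ι ι ℂ) :
    ∀ᶠ t in 𝓝 (1 : ℝ), ∀ k ∉ TSet A,
      ∑ l ∈ univ.erase k, ‖A k l‖ * (if l ∈ TSet A then 1 else t) < ‖A k k‖ * t := by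
  refine eventually_all.2 fun k => ?_
  by_cases hk : k ∈ TSet A
  · exact Eventually.of_forall fun _ h => (h hk).elim
  have hcont : Continuous fun t : ℝ =>
      ∑ l ∈ univ.erase k, ‖A k l‖ * (if l ∈ TSet A then 1 else t) :=
    continuous_finsetSum _ fun l _ => continuous_const.mul
      (continuous_if_const _ (fun _ => continuous_const) fun _ => continuous_id)
  have h1 : ∑ l ∈ univ.erase k, ‖A k l‖ * (if l ∈ TSet A then 1 else 1) < ‖A k k‖ * 1 := by
    simp only [ite_self, mul_one]
    exact not_le.1 (mt mem_TSet.2 hk)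
  filter_upwards [(hcont.tendsto 1).eventually_lt
    ((continuous_const.mul continuous_id).tendsto 1) h1] with t ht _ using ht

lemma exists_scaling_TSet_subset_erase {A : Matrix ι ι ℂ} (hA : IsDD A) {i j : ι} (hji : j ≠ i)
    (hj : j ∉ TSet A) (hij : A i j ≠ 0) :
    ∃ t : ℝ, 0 < t ∧ t < 1 ∧
      let B := A * Matrix.diagonal fun k => ((if k ∈ TSet A then 1 else t : ℝ) : ℂ)
      IsDD B ∧ TSet B ⊆ (TSet A).erase i := by
  set s : ℝ → ι → ℝ := fun t k => if k ∈ TSet A then 1 else t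
  have hIoo : ∀ᶠ t in 𝓝[<] (1 : ℝ), t ∈ Set.Ioo 0 1 := Ioo_mem_nhdsLT one_pos
  obtain ⟨t, ⟨ht0, ht1⟩, hlt⟩ :=
    (hIoo.and (nhdsWithin_le_nhds (eventually_sum_mul_scaling_lt A))).exists
  have hs0 : ∀ k, 0 ≤ s t k := fun k => by positivity
  have hs1 : ∀ k, s t k ≤ 1 := fun k => by by_cases hk : k ∈ TSet A <;> simp [s, hk, ht1.le]
  have hle : ∀ k, ∑ l ∈ univ.erase k, ‖A k l‖ * s t l ≤ rowSum A k :=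
    fun k => sum_le_sum fun l _ => mul_le_of_le_one_right (norm_nonneg _) (hs1 l)
  have hlt_i : ∑ l ∈ univ.erase i, ‖A i l‖ * s t l < rowSum A i := by
    refine sum_lt_sum (fun l _ => mul_le_of_le_one_right (norm_nonneg _) (hs1 l))
      ⟨j, mem_erase.2 ⟨hji, mem_univ j⟩, ?_⟩
    simpa only [s, hj, if_false] using mul_lt_of_lt_one_right (norm_pos_iff.2 hij) ht1
  have hdom : ∀ k, ∑ l ∈ univ.erase k, ‖A k l‖ * s t l ≤ ‖A k k‖ * s t k ∧
      (k ∉ (TSet A).erase i → ∑ l ∈ univ.erase k, ‖A k l‖ * s t l < ‖A k k‖ * s t k) := by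
    intro k
    by_cases hk : k ∈ TSet A
    · simp only [s, hk, if_true, mul_one]
      refine ⟨(hle k).trans (hA k), fun hki => ?_⟩
      obtain rfl : k = i := by simpa [hk] using hki
      exact hlt_i.trans_le (hA k)
    · simp only [s, hk, if_false]
      exact ⟨(hlt k hk).le, fun _ => hlt k hk⟩
  refine ⟨t, ht0, ht1, ?_⟩
  intro B
  have hB : ∀ k, rowSum B k = ∑ l ∈ univ.erase k, ‖A k l‖ * s t l ∧ ‖B k k‖ = ‖A k k‖ * s t k :=
    fun k => ⟨rowSumOn_mul_diagonal_ofReal A hs0 univ k, norm_mul_diagonal_ofReal A hs0 k k⟩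
  refine ⟨fun k => ?_, fun k hk => ?_⟩
  · rw [(hB k).1, (hB k).2]
    exact (hdom k).1
  · by_contra hki
    rw [mem_TSet, (hB k).1, (hB k).2] at hk
    exact hk.not_gt ((hdom k).2 hki)

theorem isHMatrix_of_forall_exists_rowSumOn_lt {A : Matrix ι ι ℂ} (hA : IsDD A)
    (h : ∀ M ⊆ TSet A, M.Nonempty → ∃ i ∈ M, rowSumOn A M i < ‖A i i‖) : IsHMatrix A := by
  induction hT : #(TSet A) using Nat.strong_induction_on generalizing A with
  | _ m ih =>
  rcases (TSet A).eq_empty_or_nonempty with h0 | hne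
  · exact IsSDD.isHMatrix fun i => not_le.1 fun hi => notMem_empty i (h0 ▸ mem_TSet.2 hi)
  obtain ⟨i, hiT, hi⟩ := h _ subset_rfl hne
  obtain ⟨j, hj, hji, hij⟩ :=
    exists_ne_notMem_of_rowSumOn_lt_rowSum (hi.trans_le (mem_TSet.1 hiT))
  obtain ⟨t, ht0, -, hBdd, hBT⟩ := exists_scaling_TSet_subset_erase hA hji hj hij
  set s : ι → ℝ := fun k => if k ∈ TSet A then 1 else t
  have hs0 : ∀ k, 0 < s k := fun k => by positivity
  refine IsHMatrix.of_mul_diagonal hs0 (ih _ ?_ hBdd ?_ rfl)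
  · exact hT ▸ card_lt_card (hBT.trans_ssubset (erase_ssubset hiT))
  intro M hM hMne
  have hs1 : ∀ k ∈ M, s k = 1 := fun k hk => if_pos (erase_subset _ _ (hBT (hM hk)))
  obtain ⟨k, hkM, hk⟩ := h M (hM.trans (hBT.trans (erase_subset _ _))) hMne
  refine ⟨k, hkM, ?_⟩
  rw [rowSumOn_mul_diagonal_ofReal A (fun l => (hs0 l).le),
    norm_mul_diagonal_ofReal A (fun l => (hs0 l).le), hs1 k hkM, mul_one]
  rwa [sum_congr rfl fun l hl => by rw [hs1 l (mem_of_mem_erase hl), mul_one]]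

end

theorem not_hmatrix_iff_general (n : ℕ)
    (A : Matrix (Fin n) (Fin n) ℂ) (hDD : IsDD A) :
    ¬ IsHMatrix A ↔
      ∃ M : Finset (Fin n), M ⊆ TSet A ∧ M.Nonempty ∧
        ∀ i ∈ M, ‖A i i‖ ≤ rowSumOn A M i := by
  refine ⟨fun hA => ?_, fun ⟨M, _, hMne, hM⟩ hA => ?_⟩
  · by_contra! hM
    exact hA (isHMatrix_of_forall_exists_rowSumOn_lt hDD hM)
  · obtain ⟨i, hi, hlt⟩ := hA.exists_rowSumOn_lt hMne
    exact (hM i hi).not_gt hlt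

/-- Corollary. A DD matrix `A ∈ ℂⁿˣⁿ`, `n ≥ 2`, is not an
H-matrix iff there is a nonempty `M ⊆ T(A)` such that the (DD) principal
submatrix `A|_{M²}` is not DD+, i.e. `|a_ii| ≤ ∑_{j ∈ M, j ≠ i} |a_ij|` for
every `i ∈ M`. -/
theorem not_hmatrix_iff (n : ℕ) (hn : 2 ≤ n)
    (A : Matrix (Fin n) (Fin n) ℂ) (hDD : IsDD A) :
    ¬ IsHMatrix A ↔
      ∃ M : Finset (Fin n), M ⊆ TSet A ∧ M.Nonempty ∧
        ∀ i ∈ M, ‖A i i‖ ≤ rowSumOn A M i :=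
  not_hmatrix_iff_general n A hDD

end
end

section
/- Let A = [a_ij] ∈ ℂ^{n×n}, n ≥ 2, be a DD matrix. Then A is an H-matrix if and only if T(A) = ∅, or for each i₀ ∈ T(A) there exists a nonzero elements chain a_{i₀i₁}, a_{i₁i₂}, …, a_{i_{r-1}i_r} with i_r ∈ N \ T(A). -/
open scoped BigOperators

noncomputable section

/-! Scaling column `j` by `d j > 0` turns row `i` into `∑_{j ≠ i} |a_ij| d_j < |a_ii| d_i`.
If some index of `T(A)` has no chain out, the indices without a chain out form a nonempty subset
of `T(A)` closed under the nonzero pattern of `A`, and the scaled row inequality fails at the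
index of that set with the smallest weight. Conversely, if `ℓ i` is the length of a shortest chain
from `i` out of `T(A)`, the weights `d i = 1 - ε ^ (ℓ i + 1)` work for small `ε > 0`: a strictly
dominant row loses at most the factor `1 - ε`, while a row in `T(A)` has a neighbour `j` with
`ℓ j < ℓ i`, whose weight deficit `|a_ij| ε ^ (ℓ j + 1) ≥ |a_ij| ε ^ ℓ i` beats the row's own
deficit `r_i ε ^ (ℓ i + 1)`. -/

open Finset Filter Topology

section

variable {ι : Type*} [Fintype ι] [DecidableEq ι] {A : Matrix ι ι ℂ}

theorem mem_TSet_iff {i : ι} : i ∈ TSet A ↔ ‖A i i‖ ≤ rowSum A i := by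
  simp [TSet]

theorem isHMatrix_iff_exists_weights :
    IsHMatrix A ↔ ∃ d : ι → ℝ, (∀ i, 0 < d i) ∧
      ∀ i, ∑ j ∈ univ.erase i, ‖A i j‖ * d j < ‖A i i‖ * d i := by
  have hnorm : ∀ {d : ι → ℝ}, (∀ i, 0 < d i) → ∀ i j,
      ‖(A * Matrix.diagonal fun k => (d k : ℂ)) i j‖ = ‖A i j‖ * d j := fun hd i j => by
    rw [Matrix.mul_diagonal, norm_mul, Complex.norm_real, Real.norm_of_nonneg (hd j).le]
  refine exists_congr fun d => and_congr_right fun hd => forall_congr' fun i => ?_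
  simp only [rowSum, rowSumOn, hnorm hd]

theorem not_isHMatrix_of_closed {S : Finset ι} (hne : S.Nonempty) (hST : S ⊆ TSet A)
    (hclosed : ∀ i ∈ S, ∀ j, A i j ≠ 0 → j ∈ S) : ¬ IsHMatrix A := by
  rw [isHMatrix_iff_exists_weights]
  rintro ⟨d, hd, hdom⟩
  obtain ⟨i, hiS, hmin⟩ := S.exists_min_image d hne
  refine (hdom i).not_ge ?_
  calc ‖A i i‖ * d i ≤ rowSum A i * d i :=
        mul_le_mul_of_nonneg_right (mem_TSet_iff.1 (hST hiS)) (hd i).le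
    _ = ∑ j ∈ univ.erase i, ‖A i j‖ * d i := Finset.sum_mul _ _ _
    _ ≤ ∑ j ∈ univ.erase i, ‖A i j‖ * d j := by
        refine sum_le_sum fun j _ => ?_
        by_cases hij : A i j = 0
        · simp [hij]
        · exact mul_le_mul_of_nonneg_left (hmin j (hclosed i hiS j hij)) (norm_nonneg _)

theorem weighted_row_lt_of_strict {d : ι → ℝ} (hd : ∀ k, d k ≤ 1) {i : ι}
    (hi : rowSum A i < ‖A i i‖ * d i) :
    ∑ k ∈ univ.erase i, ‖A i k‖ * d k < ‖A i i‖ * d i :=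
  calc ∑ k ∈ univ.erase i, ‖A i k‖ * d k ≤ ∑ k ∈ univ.erase i, ‖A i k‖ :=
        sum_le_sum fun k _ => mul_le_of_le_one_right (norm_nonneg _) (hd k)
    _ < ‖A i i‖ * d i := hi

theorem weighted_row_lt_of_gap {d : ι → ℝ} (hd : ∀ k, d k ≤ 1) {i j : ι} (hdi : 0 ≤ d i)
    (hDD : rowSum A i ≤ ‖A i i‖) (hji : j ≠ i)
    (hgap : rowSum A i * (1 - d i) < ‖A i j‖ * (1 - d j)) :
    ∑ k ∈ univ.erase i, ‖A i k‖ * d k < ‖A i i‖ * d i := by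
  have hdeficit : ‖A i j‖ * (1 - d j) ≤ ∑ k ∈ univ.erase i, ‖A i k‖ * (1 - d k) :=
    single_le_sum (f := fun k => ‖A i k‖ * (1 - d k))
      (fun k _ => mul_nonneg (norm_nonneg _) (sub_nonneg.2 (hd k))) (mem_erase.2 ⟨hji, mem_univ j⟩)
  have hsplit : ∑ k ∈ univ.erase i, ‖A i k‖ * d k
      = rowSum A i - ∑ k ∈ univ.erase i, ‖A i k‖ * (1 - d k) := by
    simp only [rowSum, rowSumOn, ← sum_sub_distrib]
    exact sum_congr rfl fun k _ => by ring
  nlinarith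

theorem eventually_mul_lt (c : ℝ) {b : ℝ} (hb : 0 < b) : ∀ᶠ ε in 𝓝[>] (0 : ℝ), ε * c < b := by
  have : Tendsto (fun ε : ℝ => ε * c) (𝓝[>] 0) (𝓝 0) :=
    ((continuous_mul_const c).tendsto' 0 0 (zero_mul c)).mono_left nhdsWithin_le_nhds
  exact this.eventually (gt_mem_nhds hb)

theorem isHMatrix_of_descent (hDD : IsDD A) (lvl : ι → ℕ)
    (hdesc : ∀ i ∈ TSet A, ∃ j, A i j ≠ 0 ∧ lvl j < lvl i) : IsHMatrix A := by
  rw [isHMatrix_iff_exists_weights]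
  have hrow : ∀ i, ∀ᶠ ε in 𝓝[>] (0 : ℝ), ε < 1 →
      ∑ k ∈ univ.erase i, ‖A i k‖ * (1 - ε ^ (lvl k + 1)) < ‖A i i‖ * (1 - ε ^ (lvl i + 1)) := by
    intro i
    by_cases hi : i ∈ TSet A
    · obtain ⟨j, hij, hji⟩ := hdesc i hi
      filter_upwards [eventually_mul_lt (rowSum A i) (norm_pos_iff.2 hij), self_mem_nhdsWithin]
        with ε hε (hε0 : 0 < ε) hε1
      refine weighted_row_lt_of_gap (fun k => by simp [pow_nonneg hε0.le]) ?_ (hDD i)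
        (fun h => hji.ne (congrArg lvl h)) ?_
      · exact sub_nonneg.2 (pow_le_one₀ hε0.le hε1.le)
      · have hpow : ε ^ lvl i ≤ ε ^ (lvl j + 1) := pow_le_pow_of_le_one hε0.le hε1.le hji
        calc rowSum A i * (1 - (1 - ε ^ (lvl i + 1))) = ε ^ lvl i * (ε * rowSum A i) := by ring
          _ < ε ^ lvl i * ‖A i j‖ := mul_lt_mul_of_pos_left hε (pow_pos hε0 _)
          _ ≤ ε ^ (lvl j + 1) * ‖A i j‖ := mul_le_mul_of_nonneg_right hpow (norm_nonneg _)
          _ = ‖A i j‖ * (1 - (1 - ε ^ (lvl j + 1))) := by ring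
    · have hstrict : 0 < ‖A i i‖ - rowSum A i := sub_pos.2 (not_le.1 (mem_TSet_iff.not.1 hi))
      filter_upwards [eventually_mul_lt ‖A i i‖ hstrict, self_mem_nhdsWithin]
        with ε hε (hε0 : 0 < ε) hε1
      refine weighted_row_lt_of_strict (fun k => by simp [pow_nonneg hε0.le]) ?_
      have hpow : ε ^ (lvl i + 1) ≤ ε := pow_le_of_le_one hε0.le hε1.le (Nat.succ_ne_zero _)
      nlinarith [norm_nonneg (A i i)]
  obtain ⟨ε, hε, hε0, hε1⟩ :=
    ((eventually_all.2 hrow).and (Ioo_mem_nhdsGT one_pos)).exists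
  refine ⟨fun k => 1 - ε ^ (lvl k + 1), fun k => ?_, fun i => hε i hε1⟩
  exact sub_pos.2 (pow_lt_one₀ hε0.le hε1 (Nat.succ_ne_zero _))

def HasChainOutOfLength (A : Matrix ι ι ℂ) (r : ℕ) (i : ι) : Prop :=
  ∃ c : Fin (r + 1) → ι, c 0 = i ∧ (∀ k : Fin r, A (c k.castSucc) (c k.succ) ≠ 0) ∧
    c (Fin.last r) ∉ TSet A

theorem hasChainOutOfLength_zero {i : ι} : HasChainOutOfLength A 0 i ↔ i ∉ TSet A :=
  ⟨fun ⟨_, hc0, _, hlast⟩ => hc0 ▸ hlast, fun hi => ⟨fun _ => i, rfl, Fin.elim0, hi⟩⟩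

theorem hasChainOutOfLength_succ {r : ℕ} {i : ι} :
    HasChainOutOfLength A (r + 1) i ↔ ∃ j, A i j ≠ 0 ∧ HasChainOutOfLength A r j := by
  constructor
  · rintro ⟨c, rfl, hstep, hlast⟩
    exact ⟨c 1, hstep 0, Fin.tail c, rfl, fun k => by simpa [Fin.tail] using hstep k.succ, hlast⟩
  · rintro ⟨j, hij, c, rfl, hstep, hlast⟩
    refine ⟨Fin.cons i c, rfl, Fin.cases hij fun k => ?_, hlast⟩
    simpa [← Fin.succ_castSucc] using hstep k

theorem hasChainOut_iff_exists_length {i : ι} (hi : i ∈ TSet A) :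
    HasChainOut A i ↔ ∃ r, HasChainOutOfLength A r i := by
  constructor
  · rintro ⟨r, c, -, hc⟩
    exact ⟨r, c, hc⟩
  · rintro ⟨r, c, hc⟩
    refine ⟨r, c, Nat.pos_of_ne_zero ?_, hc⟩
    rintro rfl
    exact hasChainOutOfLength_zero.1 ⟨c, hc⟩ hi

theorem TSet_eq_empty_or_forall_hasChainOut_iff :
    (TSet A = ∅ ∨ ∀ i₀ ∈ TSet A, HasChainOut A i₀) ↔ ∀ i, ∃ r, HasChainOutOfLength A r i := by
  constructor
  · intro h i
    by_cases hi : i ∈ TSet A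
    · have hT : TSet A ≠ ∅ := ne_empty_of_mem hi
      exact (hasChainOut_iff_exists_length hi).1 (h.resolve_left hT i hi)
    · exact ⟨0, hasChainOutOfLength_zero.2 hi⟩
  · exact fun h => Or.inr fun i hi => (hasChainOut_iff_exists_length hi).2 (h i)

theorem exists_hasChainOutOfLength_of_isHMatrix (hH : IsHMatrix A) (i : ι) :
    ∃ r, HasChainOutOfLength A r i := by
  classical
  by_contra hi
  let S := univ.filter fun k => ¬ ∃ r, HasChainOutOfLength A r k
  refine not_isHMatrix_of_closed (S := S) ⟨i, by simpa [S] using hi⟩ (fun k hk => ?_)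
    (fun k hk j hkj => ?_) hH
  · by_contra hkT
    exact (mem_filter.1 hk).2 ⟨0, hasChainOutOfLength_zero.2 hkT⟩
  · by_contra hj
    obtain ⟨r, hr⟩ : ∃ r, HasChainOutOfLength A r j := by simpa [S] using hj
    exact (mem_filter.1 hk).2 ⟨r + 1, hasChainOutOfLength_succ.2 ⟨j, hkj, hr⟩⟩

theorem exists_descending_level (h : ∀ i, ∃ r, HasChainOutOfLength A r i) :
    ∃ lvl : ι → ℕ, ∀ i ∈ TSet A, ∃ j, A i j ≠ 0 ∧ lvl j < lvl i := by
  classical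
  refine ⟨fun i => Nat.find (h i), fun i hi => ?_⟩
  obtain ⟨m, hm⟩ : ∃ m, Nat.find (h i) = m + 1 := by
    refine Nat.exists_eq_succ_of_ne_zero fun h0 => ?_
    exact hasChainOutOfLength_zero.1 (h0 ▸ Nat.find_spec (h i)) hi
  obtain ⟨j, hij, hj⟩ := hasChainOutOfLength_succ.1 (hm ▸ Nat.find_spec (h i))
  have hjm : Nat.find (h j) ≤ m := Nat.find_le hj
  exact ⟨j, hij, show Nat.find (h j) < Nat.find (h i) by omega⟩

end

theorem dd_hmatrix_iff_chain_general (n : ℕ)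
    (A : Matrix (Fin n) (Fin n) ℂ) (hDD : IsDD A) :
    IsHMatrix A ↔ (TSet A = ∅ ∨ ∀ i₀ ∈ TSet A, HasChainOut A i₀) := by
  rw [TSet_eq_empty_or_forall_hasChainOut_iff]
  refine ⟨exists_hasChainOutOfLength_of_isHMatrix, fun h => ?_⟩
  obtain ⟨lvl, hlvl⟩ := exists_descending_level h
  exact isHMatrix_of_descent hDD lvl hlvl

/-- A DD matrix `A ∈ ℂⁿˣⁿ`, `n ≥ 2`, is an H-matrix iff
`T(A) = ∅` or every `i₀ ∈ T(A)` has a nonzero elements chain ending outside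
`T(A)`. -/
theorem dd_hmatrix_iff_chain (n : ℕ) (hn : 2 ≤ n)
    (A : Matrix (Fin n) (Fin n) ℂ) (hDD : IsDD A) :
    IsHMatrix A ↔ (TSet A = ∅ ∨ ∀ i₀ ∈ TSet A, HasChainOut A i₀) :=
  dd_hmatrix_iff_chain_general n A hDD

end
end
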